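/- arXiv:1301.4671 — 4 statements merged into one kernel-verified Lean document; each statement's English description precedes it below -/
import Mathlib

section
/- Let f : ℝ → ℝ be locally integrable, and for s ∈ ℝ let f_s(x) = f(x - s). For the dyadic net D(ρ) of intervals [j 2^{-k}ρ, (j+1)2^{-k}ρ), let I_k^{(ρ)}(x) denote the unique interval of length 2^{-k}ρ in D(ρ) containing x, and write Δf(I) = f(b) - f(a) for I = [a,b). Then for every x ∈ ℝ and every k ≥ 1, ∫_0^ρ Δf_s(I_k^{(ρ)}(x+s)) ds = 2^k ∫_0^{2^{-k}ρ} (f(x+t) - f(x-t)) dt. -/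
open MeasureTheory intervalIntegral

/-- Averaging lemma (Lemma 3.1): for a locally integrable `f`, any `x`, `k ≥ 1`,
`∫_0^ρ Δf_s(I_k^{(ρ)}(x+s)) ds = 2^k ∫_0^{2^{-k}ρ} (f(x+t) - f(x-t)) dt`,
where `I_k^{(ρ)}(y) = [ℓ⌊y/ℓ⌋, ℓ(⌊y/ℓ⌋+1))` with `ℓ = 2^{-k}ρ` and `f_s(y) = f(y-s)`. -/
theorem stmt5 (f : ℝ → ℝ) (hf : LocallyIntegrable f volume)
    (ρ : ℝ) (hρ : 1 ≤ ρ) (hρ2 : ρ ≤ 2) (x : ℝ) (k : ℕ) (hk : 1 ≤ k) :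
    (∫ s in (0 : ℝ)..ρ,
        (f (((⌊(x + s) / (ρ / 2 ^ k)⌋ : ℝ) + 1) * (ρ / 2 ^ k) - s) -
         f ((⌊(x + s) / (ρ / 2 ^ k)⌋ : ℝ) * (ρ / 2 ^ k) - s))) =
      2 ^ k * ∫ t in (0 : ℝ)..(ρ / 2 ^ k), (f (x + t) - f (x - t)) := by
  set ℓ : ℝ := ρ / 2 ^ k with hℓdef
  have hℓpos : 0 < ℓ := by positivity
  have hℓne : ℓ ≠ 0 := hℓpos.ne'
  have hfint : ∀ a b : ℝ, IntervalIntegrable f volume a b := fun a b =>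
    (hf.integrableOn_isCompact isCompact_uIcc).intervalIntegrable
  have hcompS : ∀ c a b : ℝ, IntervalIntegrable (fun u => f (c - u)) volume a b := by
    intro c a b
    simpa using (hfint (c - a) (c - b)).comp_sub_left c
  have hcompA : ∀ c a b : ℝ, IntervalIntegrable (fun u => f (c + u)) volume a b := by
    intro c a b
    simpa using (hfint (a + c) (b + c)).comp_add_left c
  set H : ℝ → ℝ := fun u => f (x + ℓ - ℓ * Int.fract (u / ℓ)) - f (x - ℓ * Int.fract (u / ℓ))
    with hH
  set G : ℝ → ℝ := fun u => f (x + ℓ - u) - f (x - u) with hG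
  have hGint : ∀ a b : ℝ, IntervalIntegrable G volume a b := fun a b =>
    (hcompS (x + ℓ) a b).sub (hcompS x a b)
  -- H = G on [0, ℓ)
  have hHG : ∀ u : ℝ, u ∈ Set.Ico (0 : ℝ) ℓ → H u = G u := by
    intro u hu
    have h1 : Int.fract (u / ℓ) = u / ℓ :=
      Int.fract_eq_self.2 ⟨div_nonneg hu.1 hℓpos.le, (div_lt_one hℓpos).2 hu.2⟩
    have h2 : ℓ * (u / ℓ) = u := by field_simp
    simp [hH, hG, h1, h2]
  -- Periodicity
  have hper : Function.Periodic H ℓ := by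
    intro u
    have h1 : (u + ℓ) / ℓ = u / ℓ + 1 := by field_simp
    simp [hH, h1, Int.fract_add_one]
  -- a.e. equality on (0, ℓ]
  have hne_ae : ∀ᵐ u ∂(volume : Measure ℝ), u ≠ ℓ := by
    rw [ae_iff]
    have : {u : ℝ | ¬u ≠ ℓ} = {ℓ} := by ext u; simp
    simp [this]
  have hae : ∀ᵐ u ∂(volume : Measure ℝ), u ∈ Set.uIoc (0 : ℝ) ℓ → H u = G u := by
    filter_upwards [hne_ae] with u hne hu
    rw [Set.uIoc_of_le hℓpos.le] at hu
    exact hHG u ⟨hu.1.le, lt_of_le_of_ne hu.2 hne⟩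
  have hH0ℓ : IntervalIntegrable H volume 0 ℓ := by
    rw [intervalIntegrable_iff_integrableOn_Ioc_of_le hℓpos.le]
    have hGIoc : IntegrableOn G (Set.Ioc 0 ℓ) volume :=
      (intervalIntegrable_iff_integrableOn_Ioc_of_le hℓpos.le).1 (hGint 0 ℓ)
    refine hGIoc.congr_fun_ae ?_
    rw [Filter.EventuallyEq, ae_restrict_iff' measurableSet_Ioc]
    filter_upwards [hae] with u h hu
    exact (h (by rwa [Set.uIoc_of_le hℓpos.le])).symm
  -- Shifted integrability
  have hHshift : ∀ m : ℕ, IntervalIntegrable H volume (m * ℓ) (m * ℓ + ℓ) := by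
    intro m
    have h2 := hH0ℓ.comp_sub_right (m * ℓ)
    have h3 : (fun u => H (u - m * ℓ)) = H := funext fun u => hper.sub_nat_mul_eq m
    rw [h3] at h2
    simpa [add_comm] using h2
  -- ∫_0^{nℓ} H = n ∫_0^ℓ H
  have key : ∀ n : ℕ, IntervalIntegrable H volume 0 (n * ℓ) ∧
      (∫ u in (0 : ℝ)..(n * ℓ), H u) = n * ∫ u in (0 : ℝ)..ℓ, H u := by
    intro n
    induction n with
    | zero => simp
    | succ m ih =>
      have hadj := hHshift m
      have hcast : ((m : ℝ) + 1) * ℓ = m * ℓ + ℓ := by ring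
      have hint' : IntervalIntegrable H volume 0 ((↑(m + 1) : ℝ) * ℓ) := by
        have h := ih.1.trans hadj
        push_cast
        rwa [hcast]
      refine ⟨hint', ?_⟩
      have hsplit := integral_add_adjacent_intervals ih.1 hadj
      have hshift_int : (∫ u in (m * ℓ : ℝ)..(m * ℓ + ℓ), H u) = ∫ u in (0 : ℝ)..ℓ, H u := by
        simpa using hper.intervalIntegral_add_eq (m * ℓ) 0
      push_cast
      rw [hcast, ← hsplit, ih.2, hshift_int]
      ring
  -- Rewrite the integrand
  have hint_eq : ∀ s : ℝ,
      (f (((⌊(x + s) / ℓ⌋ : ℝ) + 1) * ℓ - s) - f ((⌊(x + s) / ℓ⌋ : ℝ) * ℓ - s)) = H (x + s) := by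
    intro s
    have hfr : ℓ * Int.fract ((x + s) / ℓ) = (x + s) - (⌊(x + s) / ℓ⌋ : ℝ) * ℓ := by
      rw [Int.fract]; field_simp
    have h1 : x - ℓ * Int.fract ((x + s) / ℓ) = (⌊(x + s) / ℓ⌋ : ℝ) * ℓ - s := by
      rw [hfr]; ring
    have h2 : x + ℓ - ℓ * Int.fract ((x + s) / ℓ) = ((⌊(x + s) / ℓ⌋ : ℝ) + 1) * ℓ - s := by
      rw [hfr]; ring
    simp [hH, h1, h2]
  have hρℓ : ρ = (2 ^ k : ℕ) * ℓ := by
    rw [hℓdef]; push_cast; field_simp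
  -- Main chain
  have step1 : (∫ s in (0 : ℝ)..ρ,
      (f (((⌊(x + s) / ℓ⌋ : ℝ) + 1) * ℓ - s) - f ((⌊(x + s) / ℓ⌋ : ℝ) * ℓ - s)))
      = ∫ s in (0 : ℝ)..ρ, H (x + s) := by
    apply intervalIntegral.integral_congr
    intro s _
    exact hint_eq s
  have step2 : (∫ s in (0 : ℝ)..ρ, H (x + s)) = ∫ u in x..(x + ρ), H u := by
    simpa using integral_comp_add_left H x (a := 0) (b := ρ)
  have hperρ : Function.Periodic H ρ := by
    have := hper.nsmul (2 ^ k)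
    rwa [nsmul_eq_mul, ← hρℓ] at this
  have step3 : (∫ u in x..(x + ρ), H u) = ∫ u in (0 : ℝ)..ρ, H u := by
    simpa using hperρ.intervalIntegral_add_eq x 0
  have step4 : (∫ u in (0 : ℝ)..ρ, H u) = (2 ^ k : ℕ) * ∫ u in (0 : ℝ)..ℓ, H u := by
    rw [hρℓ]; exact (key (2 ^ k)).2
  have step5 : (∫ u in (0 : ℝ)..ℓ, H u) = ∫ u in (0 : ℝ)..ℓ, G u :=
    intervalIntegral.integral_congr_ae hae
  have step6 : (∫ u in (0 : ℝ)..ℓ, G u) = ∫ t in (0 : ℝ)..ℓ, (f (x + t) - f (x - t)) := by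
    rw [hG]
    rw [intervalIntegral.integral_sub (hcompS (x + ℓ) 0 ℓ) (hcompS x 0 ℓ),
      intervalIntegral.integral_sub (hcompA x 0 ℓ) (hcompS x 0 ℓ)]
    congr 1
    rw [integral_comp_sub_left f (x + ℓ), integral_comp_add_left f x]
    norm_num
  rw [step1, step2, step3, step4, step5, step6]
  push_cast
  ring
end

section
/- Fix 0 < α ≤ 1 and let f : ℝ → ℝ be locally integrable. With Γ_n^{(ρ)}(f)(x) = ∑_{k=1}^n Δf(I_k^{(ρ)}(x))/(2^{-k}ρ)^α, one has for every x ∈ ℝ: ∫_1^2 ∫_0^ρ Γ_n^{(ρ)}(f_s)(x+s) ds dρ/ρ² = ∫_{2^{-n}}^1 h^{-(2+α)} (∫_0^h (f(x+t) - f(x-t)) dt) dh. -/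
/-! If `x + s = jL + r` with `r = toIcoMod L 0 (x + s) ∈ [0, L)`, the increment of `f_s` over
the grid interval `[jL, (j + 1)L)` containing `x + s` is `f (x + L - r) - f (x - r)`. It depends on
`s` only through `r`, so it is `L`-periodic in `s`, and over the `2^k` periods of mesh
`L = ρ / 2^k` filling `[0, ρ]` it integrates to `2^k ∫_0^L (f (x + t) - f (x - t)) dt`.
After dividing by `ρ²`, the substitution `h = ρ / 2^k` maps `∫_1^2 dρ` onto `[2^{-k}, 2^{1-k}]`,
and these intervals for `k = 1, …, n` tile `[2^{-n}, 1]`. -/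

open MeasureTheory intervalIntegral Set Function

section Periodization

variable {L : ℝ} (hL : 0 < L) {φ : ℝ → ℝ}

lemma periodic_comp_toIcoMod : Periodic (fun u => φ (toIcoMod hL 0 u)) L := fun u => by
  simp only [toIcoMod_add_right]

lemma eqOn_comp_toIcoMod : EqOn (fun u => φ (toIcoMod hL 0 u)) φ (uIoo 0 L) := fun u hu => by
  rw [uIoo_of_le hL.le] at hu
  simp only [(toIcoMod_eq_self hL).2 ⟨hu.1.le, by simpa using hu.2⟩]

lemma intervalIntegrable_comp_toIcoMod (hφ : IntervalIntegrable φ volume 0 L) (a b : ℝ) :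
    IntervalIntegrable (fun u => φ (toIcoMod hL 0 u)) volume a b :=
  (periodic_comp_toIcoMod hL).intervalIntegrable₀ hL.ne'
    (hφ.congr_uIoo (eqOn_comp_toIcoMod hL).symm) a b

lemma integral_comp_toIcoMod_add (hφ : IntervalIntegrable φ volume 0 L) (x : ℝ) (N : ℕ) :
    ∫ s in 0..N * L, φ (toIcoMod hL 0 (x + s)) = N * ∫ r in 0..L, φ r := by
  have hper := periodic_comp_toIcoMod (φ := φ) hL
  rw [integral_comp_add_left (fun u => φ (toIcoMod hL 0 u)), add_zero,
    ← Int.cast_natCast, ← zsmul_eq_mul,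
    hper.intervalIntegral_add_zsmul_eq _ _ (intervalIntegrable_comp_toIcoMod hL hφ),
    hper.intervalIntegral_add_eq x 0, zero_add, zsmul_eq_mul,
    integral_congr_uIoo (eqOn_comp_toIcoMod hL)]

end Periodization

section GridIncrement

variable {f : ℝ → ℝ} (hf : ∀ a b, IntervalIntegrable f volume a b)

/-- `gridIncrement f L x s` is the paper's `Δf_s(I)` for `f_s = f (· - s)` and the interval
`I = [jL, (j + 1)L)` of the grid of mesh `L` that contains `x + s`. -/
noncomputable def gridIncrement (f : ℝ → ℝ) (L x s : ℝ) : ℝ :=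
  f (((⌊(x + s) / L⌋ : ℝ) + 1) * L - s) - f ((⌊(x + s) / L⌋ : ℝ) * L - s)

lemma gridIncrement_eq {L : ℝ} (hL : 0 < L) (x s : ℝ) :
    gridIncrement f L x s =
      f (x + L - toIcoMod hL 0 (x + s)) - f (x - toIcoMod hL 0 (x + s)) := by
  rw [gridIncrement, toIcoMod, toIcoDiv_eq_floor, sub_zero, zsmul_eq_mul]
  ring_nf

include hf in
lemma intervalIntegrable_comp_sub_left_of_forall (c a b : ℝ) :
    IntervalIntegrable (fun t => f (c - t)) volume a b := by
  simpa using (hf (c - a) (c - b)).comp_sub_left c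

include hf in
lemma intervalIntegrable_comp_add_left_of_forall (c a b : ℝ) :
    IntervalIntegrable (fun t => f (c + t)) volume a b := by
  simpa using (hf (c + a) (c + b)).comp_add_left c

include hf in
theorem integral_gridIncrement {L : ℝ} (hL : 0 < L) (x : ℝ) (N : ℕ) :
    ∫ s in 0..N * L, gridIncrement f L x s = N * ∫ t in 0..L, (f (x + t) - f (x - t)) := by
  have hplus := intervalIntegrable_comp_add_left_of_forall hf x 0 L
  have hminus := intervalIntegrable_comp_sub_left_of_forall hf x 0 L
  have hreflect := intervalIntegrable_comp_sub_left_of_forall hf (x + L) 0 L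
  simp only [gridIncrement_eq hL]
  rw [integral_comp_toIcoMod_add hL (hreflect.sub hminus), integral_sub hreflect hminus,
    integral_sub hplus hminus, integral_comp_sub_left, integral_comp_add_left]
  simp

include hf in
lemma intervalIntegrable_gridIncrement {L : ℝ} (hL : 0 < L) (x a b : ℝ) :
    IntervalIntegrable (gridIncrement f L x) volume a b := by
  have hprofile := (intervalIntegrable_comp_sub_left_of_forall hf (x + L) 0 L).sub
    (intervalIntegrable_comp_sub_left_of_forall hf x 0 L)
  rw [funext (gridIncrement_eq hL x)]
  simpa using (intervalIntegrable_comp_toIcoMod hL hprofile (x + a) (x + b)).comp_add_left x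

include hf in
theorem integral_sum_gridIncrement {ρ : ℝ} (hρ : 0 < ρ) (x α : ℝ) (K : Finset ℕ) :
    ∫ s in 0..ρ, ∑ k ∈ K, gridIncrement f (ρ / 2 ^ k) x s / (ρ / 2 ^ k) ^ α =
      ∑ k ∈ K, 2 ^ k * (∫ t in 0..ρ / 2 ^ k, (f (x + t) - f (x - t))) / (ρ / 2 ^ k) ^ α := by
  have hL (k : ℕ) : 0 < ρ / 2 ^ k := by positivity
  rw [integral_finsetSum fun k _ =>
    (intervalIntegrable_gridIncrement hf (hL k) x 0 ρ).div_const _]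
  refine Finset.sum_congr rfl fun k _ => ?_
  have hperiods := integral_gridIncrement hf (hL k) x (2 ^ k)
  rw [Nat.cast_pow, Nat.cast_ofNat, mul_div_cancel₀ _ (by positivity)] at hperiods
  rw [intervalIntegral.integral_div, hperiods]

end GridIncrement

theorem sum_integral_dyadic_intervals {g : ℝ → ℝ} (hg : ContinuousOn g (Ioi 0)) (n : ℕ) :
    ∑ k ∈ Finset.Icc 1 n, ∫ h in (1 / 2 ^ k : ℝ)..2 / 2 ^ k, g h =
      ∫ h in (1 / 2 ^ n : ℝ)..1, g h := by
  have hint (a b : ℝ) (ha : 0 < a) (hb : 0 < b) : IntervalIntegrable g volume a b :=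
    (hg.mono fun t ht => lt_of_lt_of_le (lt_min ha hb) ht.1).intervalIntegrable
  induction n with
  | zero => simp
  | succ n ih =>
    have hhalf : (2 : ℝ) / 2 ^ (n + 1) = 1 / 2 ^ n := by field_simp; ring
    rw [Finset.sum_Icc_succ_top (by omega), ih, hhalf, add_comm,
      integral_add_adjacent_intervals (hint _ _ (by positivity) (by positivity))
        (hint _ _ (by positivity) one_pos)]

lemma mul_div_rpow_div_div_sq {c ρ : ℝ} (hc : 0 < c) (hρ : 0 < ρ) (F α : ℝ) :
    c * F / (ρ / c) ^ α / ρ ^ 2 = F / (ρ / c) ^ (2 + α) / c := by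
  rw [Real.rpow_add (div_pos hρ hc), Real.rpow_two]
  field_simp

theorem stmt6_general (α : ℝ)
    (f : ℝ → ℝ) (hf : LocallyIntegrable f volume) (n : ℕ) (x : ℝ) :
    (∫ ρ in (1 : ℝ)..2, (∫ s in (0 : ℝ)..ρ,
        ∑ k ∈ Finset.Icc 1 n,
          (f (((⌊(x + s) / (ρ / 2 ^ k)⌋ : ℝ) + 1) * (ρ / 2 ^ k) - s) -
           f ((⌊(x + s) / (ρ / 2 ^ k)⌋ : ℝ) * (ρ / 2 ^ k) - s)) / (ρ / 2 ^ k) ^ α) / ρ ^ 2) =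
      ∫ h in (1 / 2 ^ n : ℝ)..1,
        (∫ t in (0 : ℝ)..h, (f (x + t) - f (x - t))) / h ^ (2 + α) := by
  have hf' (a b : ℝ) : IntervalIntegrable f volume a b :=
    (hf.integrableOn_isCompact isCompact_uIcc).intervalIntegrable
  set g : ℝ → ℝ := fun h => (∫ t in (0 : ℝ)..h, (f (x + t) - f (x - t))) / h ^ (2 + α)
  have hg : ContinuousOn g (Ioi 0) := by
    have hF := continuous_primitive (fun a b =>
      (intervalIntegrable_comp_add_left_of_forall hf' x a b).sub
        (intervalIntegrable_comp_sub_left_of_forall hf' x a b)) 0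
    exact hF.continuousOn.div (continuousOn_id.rpow_const fun h hh => Or.inl (ne_of_gt hh))
      fun h hh => (Real.rpow_pos_of_pos hh _).ne'
  have hpos (ρ : ℝ) (hρ : ρ ∈ uIcc (1 : ℝ) 2) : 0 < ρ := by
    rw [uIcc_of_le one_le_two] at hρ
    linarith [hρ.1]
  calc _ = ∫ ρ in (1 : ℝ)..2, ∑ k ∈ Finset.Icc 1 n, g (ρ / 2 ^ k) / 2 ^ k := by
        refine integral_congr fun ρ hρ => ?_
        change (∫ s in 0..ρ, ∑ k ∈ _,
          gridIncrement f (ρ / 2 ^ k) x s / (ρ / 2 ^ k) ^ α) / ρ ^ 2 = _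
        rw [integral_sum_gridIncrement hf' (hpos ρ hρ), Finset.sum_div]
        exact Finset.sum_congr rfl fun k _ =>
          mul_div_rpow_div_div_sq (by positivity) (hpos ρ hρ) _ _
    _ = ∑ k ∈ Finset.Icc 1 n, ∫ ρ in (1 : ℝ)..2, g (ρ / 2 ^ k) / 2 ^ k :=
        integral_finsetSum fun k _ => ContinuousOn.intervalIntegrable <|
          (hg.comp (continuousOn_id.div_const _) fun ρ hρ =>
            div_pos (hpos ρ hρ) (by positivity)).div_const _
    _ = ∑ k ∈ Finset.Icc 1 n, ∫ h in (1 / 2 ^ k : ℝ)..2 / 2 ^ k, g h := by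
        refine Finset.sum_congr rfl fun k _ => ?_
        rw [intervalIntegral.integral_div, integral_comp_div g (by positivity), smul_eq_mul,
          mul_div_cancel_left₀ _ (by positivity)]
    _ = _ := sum_integral_dyadic_intervals hg n

/-- Averaging identity: `∫_1^2 ∫_0^ρ Γ_n^{(ρ)}(f_s)(x+s) ds dρ/ρ²
= ∫_{2^{-n}}^1 h^{-(2+α)} ∫_0^h (f(x+t) - f(x-t)) dt dh`, where
`Γ_n^{(ρ)}(g)(y) = ∑_{k=1}^n Δg(I_k^{(ρ)}(y))/(2^{-k}ρ)^α` and `f_s(y) = f(y-s)`. -/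
theorem stmt6 (α : ℝ) (hα : 0 < α) (hα1 : α ≤ 1)
    (f : ℝ → ℝ) (hf : LocallyIntegrable f volume) (n : ℕ) (hn : 1 ≤ n) (x : ℝ) :
    (∫ ρ in (1 : ℝ)..2, (∫ s in (0 : ℝ)..ρ,
        ∑ k ∈ Finset.Icc 1 n,
          (f (((⌊(x + s) / (ρ / 2 ^ k)⌋ : ℝ) + 1) * (ρ / 2 ^ k) - s) -
           f ((⌊(x + s) / (ρ / 2 ^ k)⌋ : ℝ) * (ρ / 2 ^ k) - s)) / (ρ / 2 ^ k) ^ α) / ρ ^ 2) =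
      ∫ h in (1 / 2 ^ n : ℝ)..1,
        (∫ t in (0 : ℝ)..h, (f (x + t) - f (x - t))) / h ^ (2 + α) :=
  stmt6_general α f hf n x
end

section
/- Fix 0 < α < 1 and define f(x) = ∑_{j=0}^∞ 2^{-jα} sin(2π 2^j x). Then for each N ≥ 1, Θ_{2^{-N}}(f)(x) = 2 ∑_{j=0}^∞ c_{j,N} cos(2π 2^j x) where c_{j,N} = ∫_{2^{j-N}}^{2^j} sin(2πt) t^{-(1+α)} dt; moreover there is a constant c₁(α) > 0 with |c_{j,N}| ≤ c₁(α) 2^{-(j-N)(1+α)} for all j, N ≥ 1, and hence ∑_{j ≥ N} |c_{j,N}| ≤ 2 c₁(α). -/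
/-!
Since `sin (θ (x + h)) - sin (θ (x - h)) = 2 cos (θ x) sin (θ h)`, the lacunary series can be
integrated termwise against `h ^ (-(1 + α))` on `[2⁻ᴺ, 1]` (its terms are dominated by the
geometric series `2 · 2^(-jα)`), and the substitution `t = 2 ^ j h` turns the `j`-th term into
`2 c_{j,N} cos (2π 2^j x)`. Integrating `sin (2π t)` by parts against the decreasing weight
`t ^ (-(1 + α))` bounds `|∫_a^b|` by `a ^ (-(1 + α)) / π` for every `a > 0`: the two boundary
terms and the total variation of the weight each contribute at most `a ^ (-(1 + α)) / (2π)`.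
Hence `c₁ = 1 / π` works, and the tail sum is dominated by `(1 / π) ∑ 2⁻ʲ = 2 / π`.
-/

open MeasureTheory Real Set

lemma abs_integral_rpow_mul_sin_le {ω p a b : ℝ} (hω : 0 < ω) (hp : p ≤ 0) (ha : 0 < a)
    (hab : a ≤ b) : |∫ t in a..b, t ^ p * sin (ω * t)| ≤ 2 * a ^ p / ω := by
  have hpos : ∀ t ∈ uIcc a b, 0 < t := fun t ht => ha.trans_le (uIcc_of_le hab ▸ ht).1
  set v : ℝ → ℝ := fun t => -cos (ω * t) / ω
  have hu : ∀ t ∈ uIcc a b, HasDerivAt (· ^ p) (p * t ^ (p - 1)) t :=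
    fun t ht => hasDerivAt_rpow_const (Or.inl (hpos t ht).ne')
  have hv : ∀ t ∈ uIcc a b, HasDerivAt v (sin (ω * t)) t := by
    intro t _
    exact ((hasDerivAt_id' t).const_mul ω).cos.fun_neg.div_const ω |>.congr_deriv (by field_simp)
  have hu' : ContinuousOn (fun t => p * t ^ (p - 1)) (uIcc a b) :=
    continuousOn_const.mul (continuousOn_id.rpow_const fun t ht => Or.inl (hpos t ht).ne')
  have hv_le : ∀ t, |v t| ≤ 1 / ω := fun t => by
    rw [abs_div, abs_neg, abs_of_pos hω]
    gcongr
    exact abs_cos_le_one _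
  have hvar : ∫ t in a..b, -(p * t ^ (p - 1)) / ω = (a ^ p - b ^ p) / ω := by
    rw [intervalIntegral.integral_eq_sub_of_hasDerivAt (f := fun t => -t ^ p / ω)
      (fun t ht => (hu t ht).neg.div_const ω) (hu'.neg.div_const ω).intervalIntegrable]
    ring
  have hrest : |∫ t in a..b, p * t ^ (p - 1) * v t| ≤ (a ^ p - b ^ p) / ω := by
    rw [← hvar, ← norm_eq_abs]
    refine intervalIntegral.norm_integral_le_of_norm_le hab (ae_of_all _ fun t ht => ?_)
      (hu'.neg.div_const ω).intervalIntegrable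
    have ht : 0 < t ^ (p - 1) := rpow_pos_of_pos (ha.trans ht.1) _
    calc ‖p * t ^ (p - 1) * v t‖ = -p * t ^ (p - 1) * |v t| := by
          rw [norm_eq_abs, abs_mul, abs_mul, abs_of_nonpos hp, abs_of_pos ht]
      _ ≤ -p * t ^ (p - 1) * (1 / ω) := by gcongr; exacts [by nlinarith, hv_le t]
      _ = -(p * t ^ (p - 1)) / ω := by ring
  rw [intervalIntegral.integral_mul_deriv_eq_deriv_mul hu hv hu'.intervalIntegrable
    ((continuous_sin.comp (continuous_const_mul ω)).intervalIntegrable a b)]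
  have hb : |b ^ p * v b| ≤ b ^ p / ω := by
    rw [abs_mul, abs_of_pos (rpow_pos_of_pos (ha.trans_le hab) p), ← mul_one_div]
    exact mul_le_mul_of_nonneg_left (hv_le b) (rpow_nonneg (ha.le.trans hab) p)
  have ha' : |a ^ p * v a| ≤ a ^ p / ω := by
    rw [abs_mul, abs_of_pos (rpow_pos_of_pos ha p), ← mul_one_div]
    exact mul_le_mul_of_nonneg_left (hv_le a) (rpow_nonneg ha.le p)
  calc _ ≤ |b ^ p * v b| + |a ^ p * v a| + |∫ t in a..b, p * t ^ (p - 1) * v t| :=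
        (abs_sub _ _).trans (by gcongr; exact abs_sub _ _)
    _ ≤ b ^ p / ω + a ^ p / ω + (a ^ p - b ^ p) / ω := by gcongr
    _ = 2 * a ^ p / ω := by ring

lemma abs_integral_sin_div_rpow_le {s a b : ℝ} (hs : 0 ≤ s) (ha : 0 < a) (hab : a ≤ b) :
    |∫ t in a..b, sin (2 * π * t) / t ^ s| ≤ a ^ (-s) / π := by
  have hrpow : ∀ t ∈ uIcc a b, sin (2 * π * t) / t ^ s = t ^ (-s) * sin (2 * π * t) := by
    intro t ht
    rw [rpow_neg (ha.le.trans (uIcc_of_le hab ▸ ht).1), div_eq_inv_mul]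
  rw [intervalIntegral.integral_congr hrpow]
  convert abs_integral_rpow_mul_sin_le two_pi_pos (neg_nonpos.2 hs) ha hab using 1
  field_simp

lemma two_rpow_neg_natCast_mul (α : ℝ) (j : ℕ) :
    (2 : ℝ) ^ (-(j : ℝ) * α) = ((2 : ℝ) ^ (-α)) ^ j := by
  rw [← rpow_natCast, ← rpow_mul zero_le_two]
  ring_nf

lemma summable_two_rpow_neg_natCast_mul {α : ℝ} (hα : 0 < α) :
    Summable fun j : ℕ => (2 : ℝ) ^ (-(j : ℝ) * α) := by
  simp_rw [two_rpow_neg_natCast_mul]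
  exact summable_geometric_of_lt_one (rpow_nonneg zero_le_two _)
    (rpow_lt_one_of_one_lt_of_neg one_lt_two (neg_neg_of_pos hα))

lemma two_rpow_neg_natCast_mul_le (j : ℕ) {s : ℝ} (hs : 1 ≤ s) :
    (2 : ℝ) ^ (-(j : ℝ) * s) ≤ (1 / 2) ^ j := by
  rw [one_div, inv_pow, ← rpow_natCast, ← rpow_neg zero_le_two]
  exact rpow_le_rpow_of_exponent_le one_le_two (by nlinarith [(j.cast_nonneg : (0 : ℝ) ≤ j)])

lemma tsum_abs_le_of_abs_le_geometric_two {u : ℕ → ℝ} {C : ℝ}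
    (hu : ∀ j, |u j| ≤ C * (1 / 2) ^ j) :
    ∑' j, |u j| ≤ 2 * C := by
  have hgeo : Summable fun j : ℕ => C * (1 / 2 : ℝ) ^ j := summable_geometric_two.mul_left C
  calc ∑' j, |u j| ≤ ∑' j : ℕ, C * (1 / 2 : ℝ) ^ j :=
        Summable.tsum_le_tsum hu (hgeo.of_nonneg_of_le (fun _ => abs_nonneg _) hu) hgeo
    _ = 2 * C := by rw [tsum_mul_left, tsum_geometric_two, mul_comm]

lemma integral_sin_mul_div_rpow_comp_mul (ω s : ℝ) {k A B : ℝ} (hk : 0 < k) (hA : 0 ≤ A)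
    (hB : 0 ≤ B) :
    ∫ h in A..B, sin (ω * k * h) / h ^ s =
      k ^ (s - 1) * ∫ t in k * A..k * B, sin (ω * t) / t ^ s := by
  have hscale : ∀ h ∈ uIcc A B,
      sin (ω * k * h) / h ^ s = k ^ s * (sin (ω * (k * h)) / (k * h) ^ s) := by
    intro h hh
    rw [mul_rpow hk.le ((le_inf hA hB).trans hh.1), mul_assoc]
    field_simp [(rpow_pos_of_pos hk s).ne']
  rw [intervalIntegral.integral_congr hscale, intervalIntegral.integral_const_mul,
    intervalIntegral.integral_comp_mul_left (fun t => sin (ω * t) / t ^ s) hk.ne', smul_eq_mul,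
    rpow_sub_one hk.ne']
  ring

lemma hasSum_intervalIntegral_mul {ι : Type*} [Countable ι] {μ : Measure ℝ} {a b : ℝ}
    {F : ι → ℝ → ℝ} {G g : ℝ → ℝ} {M : ι → ℝ} (hF : ∀ n, Continuous (F n))
    (hFM : ∀ n t, |F n t| ≤ M n) (hM : Summable M) (hFG : ∀ t, HasSum (F · t) (G t))
    (hg : IntervalIntegrable g μ a b) :
    HasSum (fun n => ∫ t in a..b, F n t * g t ∂μ) (∫ t in a..b, G t * g t ∂μ) := by
  refine intervalIntegral.hasSum_integral_of_dominated_convergence (fun n t => M n * |g t|)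
    (fun n => (hF n).aestronglyMeasurable.mul hg.def'.aestronglyMeasurable)
    (fun n => ae_of_all _ fun t _ => ?_) (ae_of_all _ fun t _ => hM.mul_right _) ?_
    (ae_of_all _ fun t _ => (hFG t).mul_right (g t))
  · rw [norm_mul, norm_eq_abs, norm_eq_abs]
    exact mul_le_mul_of_nonneg_right (hFM n t) (abs_nonneg _)
  · simp_rw [tsum_mul_right]
    exact hg.abs.const_mul _

noncomputable def lacunaryTerm (α : ℝ) (j : ℕ) (x : ℝ) : ℝ :=
  (2 : ℝ) ^ (-(j : ℝ) * α) * sin (2 * π * 2 ^ j * x)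

noncomputable def lacunaryCoeff (α : ℝ) (j N : ℕ) : ℝ :=
  ∫ t in (2 : ℝ) ^ ((j : ℝ) - N)..(2 : ℝ) ^ (j : ℝ), sin (2 * π * t) / t ^ (1 + α)

lemma abs_lacunaryCoeff_le {α : ℝ} (hα : -1 ≤ α) (j N : ℕ) :
    |lacunaryCoeff α j N| ≤ 1 / π * (2 : ℝ) ^ (-((j : ℝ) - N) * (1 + α)) := by
  refine (abs_integral_sin_div_rpow_le (by linarith) (rpow_pos_of_pos two_pos _)
    (rpow_le_rpow_of_exponent_le one_le_two (by simp))).trans_eq ?_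
  rw [← rpow_mul zero_le_two]
  ring_nf

lemma abs_lacunaryTerm_le (α : ℝ) (j : ℕ) (x : ℝ) :
    |lacunaryTerm α j x| ≤ (2 : ℝ) ^ (-(j : ℝ) * α) := by
  rw [lacunaryTerm, abs_mul, abs_of_nonneg (rpow_nonneg zero_le_two _)]
  exact mul_le_of_le_one_right (rpow_nonneg zero_le_two _) (abs_sin_le_one _)

lemma summable_lacunaryTerm {α : ℝ} (hα : 0 < α) (x : ℝ) :
    Summable fun j => lacunaryTerm α j x :=
  (summable_two_rpow_neg_natCast_mul hα).of_norm_bounded (abs_lacunaryTerm_le α · x)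

lemma lacunaryTerm_add_sub_lacunaryTerm_sub (α : ℝ) (j : ℕ) (x h : ℝ) :
    lacunaryTerm α j (x + h) - lacunaryTerm α j (x - h) =
      2 * (2 : ℝ) ^ (-(j : ℝ) * α) * cos (2 * π * 2 ^ j * x) * sin (2 * π * 2 ^ j * h) := by
  rw [lacunaryTerm, lacunaryTerm, mul_add, mul_sub, sin_add, sin_sub]
  ring

lemma integral_lacunaryTerm_sub_mul_rpow_inv (α x : ℝ) (j N : ℕ) :
    ∫ h in (1 / 2 ^ N : ℝ)..1,
      (lacunaryTerm α j (x + h) - lacunaryTerm α j (x - h)) * (h ^ (1 + α))⁻¹ =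
      2 * (lacunaryCoeff α j N * cos (2 * π * 2 ^ j * x)) := by
  have hpow : (2 : ℝ) ^ (-(j : ℝ) * α) * ((2 : ℝ) ^ j) ^ (1 + α - 1) = 1 := by
    rw [← rpow_natCast, ← rpow_mul zero_le_two, ← rpow_add zero_lt_two]
    ring_nf
    exact rpow_zero 2
  have hlower : (2 : ℝ) ^ j * (1 / 2 ^ N) = (2 : ℝ) ^ ((j : ℝ) - N) := by
    rw [rpow_sub zero_lt_two, rpow_natCast, rpow_natCast, mul_one_div]
  have hupper : (2 : ℝ) ^ j * 1 = (2 : ℝ) ^ (j : ℝ) := by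
    rw [mul_one, rpow_natCast]
  simp_rw [lacunaryTerm_add_sub_lacunaryTerm_sub, mul_assoc _ (sin _), ← div_eq_mul_inv]
  rw [intervalIntegral.integral_const_mul,
    integral_sin_mul_div_rpow_comp_mul _ _ (by positivity) (by positivity) zero_le_one, hlower,
    hupper, ← lacunaryCoeff.eq_1]
  linear_combination 2 * cos (2 * π * 2 ^ j * x) * lacunaryCoeff α j N * hpow

lemma integral_lacunary_sub_div_rpow {α : ℝ} (hα : 0 < α) {f : ℝ → ℝ}
    (hf : ∀ x : ℝ, f x = ∑' j : ℕ, lacunaryTerm α j x) (N : ℕ) (x : ℝ) :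
    ∫ h in (1 / 2 ^ N : ℝ)..1, (f (x + h) - f (x - h)) / h ^ (1 + α) =
      2 * ∑' j : ℕ, lacunaryCoeff α j N * cos (2 * π * 2 ^ j * x) := by
  have hdiff : ∀ h : ℝ, HasSum (fun j => lacunaryTerm α j (x + h) - lacunaryTerm α j (x - h))
      (f (x + h) - f (x - h)) := fun h => by
    rw [hf, hf]
    exact (summable_lacunaryTerm hα _).hasSum.sub (summable_lacunaryTerm hα _).hasSum
  have hbound : ∀ (j : ℕ) (h : ℝ), |lacunaryTerm α j (x + h) - lacunaryTerm α j (x - h)| ≤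
      2 * (2 : ℝ) ^ (-(j : ℝ) * α) := fun j h => by
    linarith [abs_sub (lacunaryTerm α j (x + h)) (lacunaryTerm α j (x - h)),
      abs_lacunaryTerm_le α j (x + h), abs_lacunaryTerm_le α j (x - h)]
  have hkernel : IntervalIntegrable (fun h : ℝ => (h ^ (1 + α))⁻¹) volume (1 / 2 ^ N) 1 := by
    refine ((continuousOn_id.rpow_const fun h _ => Or.inr (by linarith)).inv₀
      fun h hh => ?_).intervalIntegrable
    have hpos : 0 < h := lt_of_lt_of_le (by positivity) hh.1
    exact (rpow_pos_of_pos hpos _).ne'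
  have hsum := hasSum_intervalIntegral_mul (fun j => by unfold lacunaryTerm; fun_prop) hbound
    ((summable_two_rpow_neg_natCast_mul hα).mul_left 2) hdiff hkernel
  simp_rw [div_eq_mul_inv (f _ - f _), ← hsum.tsum_eq, integral_lacunaryTerm_sub_mul_rpow_inv]
  exact tsum_mul_left

theorem stmt13_general (α : ℝ) (hα : 0 < α) (f : ℝ → ℝ)
    (hf : ∀ x : ℝ, f x = ∑' j : ℕ, (2 : ℝ) ^ (-(j : ℝ) * α) * Real.sin (2 * Real.pi * 2 ^ j * x))
    (c : ℕ → ℕ → ℝ)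
    (hc : ∀ j N : ℕ, c j N =
      ∫ t in ((2 : ℝ) ^ ((j : ℝ) - (N : ℝ)))..((2 : ℝ) ^ (j : ℝ)),
        Real.sin (2 * Real.pi * t) / t ^ (1 + α)) :
    (∀ N : ℕ, 1 ≤ N → ∀ x : ℝ,
      (∫ h in (1 / 2 ^ N : ℝ)..1, (f (x + h) - f (x - h)) / h ^ (1 + α)) =
        2 * ∑' j : ℕ, c j N * Real.cos (2 * Real.pi * 2 ^ j * x)) ∧
    ∃ c₁ : ℝ, 0 < c₁ ∧
      (∀ j N : ℕ, 1 ≤ j → 1 ≤ N →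
        |c j N| ≤ c₁ * (2 : ℝ) ^ (-((j : ℝ) - (N : ℝ)) * (1 + α))) ∧
      (∀ N : ℕ, 1 ≤ N → ∑' j : ℕ, |c (N + j) N| ≤ 2 * c₁) := by
  obtain rfl : c = lacunaryCoeff α := funext₂ hc
  refine ⟨fun N _ x => integral_lacunary_sub_div_rpow hα hf N x, 1 / π, by positivity,
    fun j N _ _ => abs_lacunaryCoeff_le (by linarith) j N, fun N _ => ?_⟩
  refine tsum_abs_le_of_abs_le_geometric_two fun j =>
    (abs_lacunaryCoeff_le (by linarith) (N + j) N).trans ?_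
  rw [Nat.cast_add, add_sub_cancel_left]
  gcongr
  exact two_rpow_neg_natCast_mul_le j (by linarith)

/-- For the lacunary function `f(x) = ∑_j 2^{-jα} sin(2π 2^j x)`:
the cosine expansion of `Θ_{2^{-N}}(f)`, the coefficient decay
`|c_{j,N}| ≤ c₁ 2^{-(j-N)(1+α)}`, and the tail bound `∑_{j ≥ N} |c_{j,N}| ≤ 2c₁`. -/
theorem stmt13 (α : ℝ) (hα : 0 < α) (hα1 : α < 1) (f : ℝ → ℝ)
    (hf : ∀ x : ℝ, f x = ∑' j : ℕ, (2 : ℝ) ^ (-(j : ℝ) * α) * Real.sin (2 * Real.pi * 2 ^ j * x))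
    (c : ℕ → ℕ → ℝ)
    (hc : ∀ j N : ℕ, c j N =
      ∫ t in ((2 : ℝ) ^ ((j : ℝ) - (N : ℝ)))..((2 : ℝ) ^ (j : ℝ)),
        Real.sin (2 * Real.pi * t) / t ^ (1 + α)) :
    (∀ N : ℕ, 1 ≤ N → ∀ x : ℝ,
      (∫ h in (1 / 2 ^ N : ℝ)..1, (f (x + h) - f (x - h)) / h ^ (1 + α)) =
        2 * ∑' j : ℕ, c j N * Real.cos (2 * Real.pi * 2 ^ j * x)) ∧
    ∃ c₁ : ℝ, 0 < c₁ ∧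
      (∀ j N : ℕ, 1 ≤ j → 1 ≤ N →
        |c j N| ≤ c₁ * (2 : ℝ) ^ (-((j : ℝ) - (N : ℝ)) * (1 + α))) ∧
      (∀ N : ℕ, 1 ≤ N → ∑' j : ℕ, |c (N + j) N| ≤ 2 * c₁) :=
  stmt13_general α hα f hf c hc
end

section
/- Fix 0 < α < 1 and an integer b > 1, and let f(x) = ∑_{j=0}^∞ b^{-jα} cos(b^j x). There is an absolute constant c > 0 and c(α,b) = c(α)(b^{-α} + b^{α−1}) such that for every integer k ≥ 0 and every x ∈ ℝ: ∫_{b^{-k}/2}^{2b^{-k}} |f(x+h) − f(x−h)| h^{−(1+α)} dh ≥ c |sin(b^k x)| − c(α,b). -/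
/-!
Write `f(x+h) - f(x-h) = ∑ⱼ -2 b^{-jα} sin(bʲx) sin(bʲh)`. When `bᵏh ∈ [1/2, 2]` the `k`-th term
is at least `2 sin(1/2) b^{-kα} |sin(bᵏx)|`. The terms `j < k` are at most `2h b^{j(1-α)}` (using
`|sin t| ≤ |t|`), a geometric sum of size `O(b^{-kα} b^{α-1})`, and the terms `j > k` are at most
`2 b^{-jα}`, summing to `O(b^{-kα} b^{-α})`. On `[b^{-k}/2, 2b^{-k}]` the weight `h^{-(1+α)}` is
comparable to `b^{k(1+α)}`, and the interval has length `(3/2) b^{-k}`.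
-/

open MeasureTheory Real

lemma sin_half_le_sin {t : ℝ} (h1 : 1 / 2 ≤ t) (h2 : t ≤ 2) : sin (1 / 2) ≤ sin t := by
  have hpi := pi_gt_three
  rcases le_total t (π / 2) with h | h
  · exact strictMonoOn_sin.monotoneOn ⟨by linarith, by linarith⟩ ⟨by linarith, h⟩ h1
  · rw [← sin_pi_sub t]
    exact strictMonoOn_sin.monotoneOn ⟨by linarith, by linarith⟩ ⟨by linarith, by linarith⟩
      (by linarith)

lemma one_div_four_le_rpow_one_add {t α : ℝ} (ht1 : 1 / 2 ≤ t) (hα0 : 0 ≤ α) (hα1 : α ≤ 1) :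
    1 / 4 ≤ t ^ (1 + α) :=
  calc (1 / 4 : ℝ) = (1 / 2) ^ (2 : ℝ) := by norm_num
    _ ≤ (1 / 2) ^ (1 + α) := rpow_le_rpow_of_exponent_ge (by norm_num) (by norm_num) (by linarith)
    _ ≤ t ^ (1 + α) := rpow_le_rpow (by norm_num) ht1 (by linarith)

lemma rpow_one_add_le_four {t α : ℝ} (ht0 : 0 ≤ t) (ht2 : t ≤ 2) (hα0 : 0 ≤ α) (hα1 : α ≤ 1) :
    t ^ (1 + α) ≤ 4 :=
  calc t ^ (1 + α) ≤ 2 ^ (1 + α) := rpow_le_rpow ht0 ht2 (by linarith)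
    _ ≤ 2 ^ (2 : ℝ) := rpow_le_rpow_of_exponent_le (by norm_num) (by linarith)
    _ = 4 := by norm_num

section CosineSeries

variable {a ω : ℕ → ℝ}

lemma summable_mul_cos (ha : Summable a) (x : ℝ) : Summable fun j => a j * cos (ω j * x) :=
  ha.abs.of_norm_bounded fun j => by
    rw [norm_mul, norm_eq_abs]
    exact mul_le_of_le_one_right (abs_nonneg _) (abs_cos_le_one _)

lemma continuous_tsum_mul_cos (ha : Summable a) : Continuous fun x => ∑' j, a j * cos (ω j * x) :=
  continuous_tsum (fun j => by fun_prop) ha.abs fun j x => by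
    rw [norm_mul, norm_eq_abs]
    exact mul_le_of_le_one_right (abs_nonneg _) (abs_cos_le_one _)

lemma tsum_mul_cos_add_sub_tsum_mul_cos_sub (ha : Summable a) (x h : ℝ) :
    ∑' j, a j * cos (ω j * (x + h)) - ∑' j, a j * cos (ω j * (x - h)) =
      ∑' j, -2 * a j * sin (ω j * x) * sin (ω j * h) := by
  rw [← (summable_mul_cos ha _).tsum_sub (summable_mul_cos ha _)]
  congr 1
  ext j
  rw [← mul_sub, cos_sub_cos]
  ring_nf

end CosineSeries

lemma abs_tsum_ge_of_dominant_term {g : ℕ → ℝ} (hg : Summable g) {k : ℕ} {A C q r : ℝ}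
    (hA : 0 ≤ A) (hq : 1 < q) (hr0 : 0 ≤ r) (hr1 : r < 1)
    (hlow : ∀ j < k, |g j| ≤ A * q ^ j) (hhigh : ∀ j, k < j → |g j| ≤ C * r ^ j) :
    |g k| - A * q ^ k / (q - 1) - C * r ^ (k + 1) / (1 - r) ≤ |∑' j, g j| := by
  have hsplit : ∑' j, g j = (∑ j ∈ Finset.range k, g j) + g k + ∑' i, g (i + (k + 1)) := by
    rw [← hg.sum_add_tsum_nat_add (k + 1), Finset.sum_range_succ]
  have hhead : |∑ j ∈ Finset.range k, g j| ≤ A * q ^ k / (q - 1) :=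
    calc |∑ j ∈ Finset.range k, g j| ≤ ∑ j ∈ Finset.range k, |g j| :=
          Finset.abs_sum_le_sum_abs _ _
      _ ≤ ∑ j ∈ Finset.range k, A * q ^ j :=
          Finset.sum_le_sum fun j hj => hlow j (Finset.mem_range.mp hj)
      _ = A * (q ^ k - 1) / (q - 1) := by rw [← Finset.mul_sum, geom_sum_eq hq.ne', mul_div_assoc]
      _ ≤ A * q ^ k / (q - 1) := by gcongr; linarith
  have htail : |∑' i, g (i + (k + 1))| ≤ C * r ^ (k + 1) / (1 - r) := by
    have hgeom : HasSum (fun i => C * r ^ (k + 1) * r ^ i) (C * r ^ (k + 1) / (1 - r)) := by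
      simpa only [div_eq_mul_inv] using (hasSum_geometric_of_lt_one hr0 hr1).mul_left _
    refine tsum_of_norm_bounded (f := fun i => g (i + (k + 1))) hgeom fun i => ?_
    rw [norm_eq_abs, mul_assoc, ← pow_add, add_comm (k + 1)]
    exact hhigh _ (by omega)
  rw [hsplit]
  set H := ∑ j ∈ Finset.range k, g j
  set T := ∑' i, g (i + (k + 1))
  have : |g k| ≤ |H + g k + T| + |H| + |T| :=
    calc |g k| = |H + g k + T - H - T| := by ring_nf
      _ ≤ |H + g k + T - H| + |T| := abs_sub _ _
      _ ≤ |H + g k + T| + |H| + |T| := by gcongr; exact abs_sub _ _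
  linarith

lemma lacunary_sin_series_lower_bound {b r : ℝ} (hr0 : 0 ≤ r) (hr1 : r < 1) (hq : 1 < r * b)
    (k : ℕ) (x : ℝ) {h : ℝ} (hh1 : 1 / 2 ≤ b ^ k * h) (hh2 : b ^ k * h ≤ 2) :
    r ^ k * (2 * sin (1 / 2) * |sin (b ^ k * x)| - (4 / (r * b - 1) + 2 * r / (1 - r))) ≤
      |∑' j, -2 * r ^ j * sin (b ^ j * x) * sin (b ^ j * h)| := by
  have hb : 0 < b := pos_of_mul_pos_right (by linarith) hr0
  have hh : 0 ≤ h := nonneg_of_mul_nonneg_right (by linarith) (pow_pos hb k)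
  set g : ℕ → ℝ := fun j => -2 * r ^ j * sin (b ^ j * x) * sin (b ^ j * h)
  have habs (j : ℕ) : |g j| = 2 * r ^ j * |sin (b ^ j * x)| * |sin (b ^ j * h)| := by
    simp only [g, abs_mul, abs_neg, abs_two, abs_of_nonneg (pow_nonneg hr0 j)]
  have hhigh (j : ℕ) : |g j| ≤ 2 * r ^ j := by
    rw [habs]
    calc 2 * r ^ j * |sin (b ^ j * x)| * |sin (b ^ j * h)| ≤ 2 * r ^ j * 1 * 1 := by
          gcongr <;> exact abs_sin_le_one _
      _ = 2 * r ^ j := by ring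
  have hlow (j : ℕ) : |g j| ≤ 2 * h * (r * b) ^ j := by
    rw [habs]
    have hsin : |sin (b ^ j * h)| ≤ b ^ j * h :=
      abs_sin_le_abs.trans_eq (abs_of_nonneg (by positivity))
    calc 2 * r ^ j * |sin (b ^ j * x)| * |sin (b ^ j * h)| ≤ 2 * r ^ j * 1 * (b ^ j * h) := by
          gcongr
          exact abs_sin_le_one _
      _ = 2 * h * (r * b) ^ j := by ring
  have hg : Summable g :=
    ((summable_geometric_of_lt_one hr0 hr1).mul_left 2).of_norm_bounded hhigh
  have hdom : r ^ k * (2 * sin (1 / 2) * |sin (b ^ k * x)|) ≤ |g k| := by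
    rw [habs]
    have := (sin_half_le_sin hh1 hh2).trans (le_abs_self _)
    have : 0 ≤ 2 * r ^ k * |sin (b ^ k * x)| := by positivity
    nlinarith
  have hhead : 2 * h * (r * b) ^ k / (r * b - 1) ≤ r ^ k * (4 / (r * b - 1)) := by
    rw [mul_pow, mul_div_assoc', div_le_div_iff_of_pos_right (by linarith)]
    nlinarith [pow_nonneg hr0 k]
  have htail : 2 * r ^ (k + 1) / (1 - r) = r ^ k * (2 * r / (1 - r)) := by ring
  have := abs_tsum_ge_of_dominant_term hg (k := k) (by positivity) hq hr0 hr1 (fun j _ => hlow j)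
    (fun j _ => hhigh j)
  rw [mul_sub, mul_add]
  linarith

noncomputable def weierstrass (b α x : ℝ) : ℝ :=
  ∑' j : ℕ, b ^ (-(j : ℝ) * α) * cos (b ^ (j : ℝ) * x)

/-- The non-dominant terms of the series contribute at most `b^{-kα}` times this: the first
summand bounds the frequencies `j < k`, the second those `j > k`. -/
noncomputable def weierstrassError (α b : ℝ) : ℝ :=
  4 / (b ^ (1 - α) - 1) + 2 * b ^ (-α) / (1 - b ^ (-α))

section Weierstrass

variable {α b : ℝ}

lemma weierstrass_eq_tsum_pow (hb : 0 ≤ b) (x : ℝ) :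
    weierstrass b α x = ∑' j : ℕ, (b ^ (-α)) ^ j * cos (b ^ j * x) := by
  refine tsum_congr fun j => ?_
  rw [← rpow_natCast (b ^ (-α)), ← rpow_mul hb, rpow_natCast]
  congr 2
  ring

lemma rpow_neg_lt_one (hα : 0 < α) (hb : 1 < b) : b ^ (-α) < 1 :=
  rpow_lt_one_of_one_lt_of_neg hb (neg_neg_of_pos hα)

lemma rpow_neg_mul_self (hb : 0 < b) : b ^ (-α) * b = b ^ (1 - α) := by
  rw [← rpow_add_one hb.ne', neg_add_eq_sub]

lemma summable_rpow_neg_pow (hα : 0 < α) (hb : 1 < b) : Summable fun j : ℕ => (b ^ (-α)) ^ j :=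
  summable_geometric_of_lt_one (by positivity) (rpow_neg_lt_one hα hb)

lemma continuous_weierstrass (hα : 0 < α) (hb : 1 < b) : Continuous (weierstrass b α) := by
  rw [funext (weierstrass_eq_tsum_pow (α := α) (by linarith : 0 ≤ b))]
  exact continuous_tsum_mul_cos (ω := fun j => b ^ j) (summable_rpow_neg_pow hα hb)

lemma weierstrass_add_sub_weierstrass_sub (hα : 0 < α) (hb : 1 < b) (x h : ℝ) :
    weierstrass b α (x + h) - weierstrass b α (x - h) =
      ∑' j : ℕ, -2 * (b ^ (-α)) ^ j * sin (b ^ j * x) * sin (b ^ j * h) := by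
  simp only [weierstrass_eq_tsum_pow (by linarith : 0 ≤ b)]
  exact tsum_mul_cos_add_sub_tsum_mul_cos_sub (ω := fun j => b ^ j)
    (summable_rpow_neg_pow hα hb) x h

lemma weierstrassError_nonneg (hα0 : 0 < α) (hα1 : α < 1) (hb : 1 < b) :
    0 ≤ weierstrassError α b := by
  have hq : 1 < b ^ (1 - α) := one_lt_rpow hb (by linarith)
  have hr : b ^ (-α) < 1 := rpow_neg_lt_one hα0 hb
  unfold weierstrassError
  have : 0 < b ^ (-α) := by positivity
  have : 0 ≤ 4 / (b ^ (1 - α) - 1) := div_nonneg (by norm_num) (by linarith)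
  have : 0 ≤ 2 * b ^ (-α) / (1 - b ^ (-α)) := div_nonneg (by positivity) (by linarith)
  linarith

lemma rpow_neg_pow_mul_rpow_one_add {h : ℝ} (hb : 0 < b) (hh : 0 ≤ h) (k : ℕ) :
    (b ^ (-α)) ^ k * (b ^ k * h) ^ (1 + α) = b ^ k * h ^ (1 + α) := by
  have hbk : 0 < b ^ k := pow_pos hb k
  have hpow : (b ^ (-α)) ^ k = (b ^ k) ^ (-α) := by
    rw [← rpow_natCast, ← rpow_natCast b k, ← rpow_mul hb.le, ← rpow_mul hb.le, mul_comm]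
  rw [hpow, mul_rpow hbk.le hh, rpow_add hbk, rpow_one, rpow_neg hbk.le]
  field_simp

lemma weierstrass_increment_lower_bound (hα0 : 0 < α) (hα1 : α < 1) (hb : 1 < b) (k : ℕ)
    (x : ℝ) {h : ℝ} (hh1 : 1 / 2 ≤ b ^ k * h) (hh2 : b ^ k * h ≤ 2) :
    b ^ k * (sin (1 / 2) / 2 * |sin (b ^ k * x)| - 4 * weierstrassError α b) ≤
      |weierstrass b α (x + h) - weierstrass b α (x - h)| / h ^ (1 + α) := by
  have hb0 : 0 < b := by linarith
  have hh : 0 < h := pos_of_mul_pos_right (by linarith) (pow_pos hb0 k).le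
  set r := b ^ (-α)
  set t := b ^ k * h
  set P := 2 * sin (1 / 2) * |sin (b ^ k * x)|
  set N := weierstrassError α b
  have hP : 0 ≤ P := mul_nonneg (mul_nonneg zero_le_two
    (sin_nonneg_of_nonneg_of_le_pi (by norm_num) (by linarith [pi_gt_three]))) (abs_nonneg _)
  have hN : 0 ≤ N := weierstrassError_nonneg hα0 hα1 hb
  have ht1 : 1 / 4 ≤ t ^ (1 + α) := one_div_four_le_rpow_one_add hh1 hα0.le hα1.le
  have ht2 : t ^ (1 + α) ≤ 4 := rpow_one_add_le_four (by linarith) hh2 hα0.le hα1.le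
  have hseries : r ^ k * (P - N) ≤ |weierstrass b α (x + h) - weierstrass b α (x - h)| := by
    rw [weierstrass_add_sub_weierstrass_sub hα0 hb]
    have := lacunary_sin_series_lower_bound (b := b) (r := r) (by positivity)
      (rpow_neg_lt_one hα0 hb) (by rw [rpow_neg_mul_self hb0]; exact one_lt_rpow hb (by linarith))
      k x hh1 hh2
    rwa [rpow_neg_mul_self hb0] at this
  rw [le_div_iff₀ (by positivity)]
  calc b ^ k * (sin (1 / 2) / 2 * |sin (b ^ k * x)| - 4 * N) * h ^ (1 + α)
        = r ^ k * ((P / 4 - 4 * N) * t ^ (1 + α)) := by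
        simp only [P]
        linear_combination (4 * N - sin (1 / 2) / 2 * |sin (b ^ k * x)|) *
          rpow_neg_pow_mul_rpow_one_add (α := α) hb0 hh.le k
    _ ≤ r ^ k * (P - N) := by gcongr; nlinarith
    _ ≤ _ := hseries

lemma weierstrass_integral_lower_bound (hα0 : 0 < α) (hα1 : α < 1) (hb : 1 < b) (k : ℕ)
    (x : ℝ) :
    3 / 4 * sin (1 / 2) * |sin (b ^ k * x)| - 6 * weierstrassError α b ≤
      ∫ h in (b ^ (-(k : ℝ)) / 2)..(2 * b ^ (-(k : ℝ))),
        |weierstrass b α (x + h) - weierstrass b α (x - h)| / h ^ (1 + α) := by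
  have hbk : 0 < b ^ k := pow_pos (by linarith) k
  have hB : b ^ (-(k : ℝ)) = (b ^ k)⁻¹ := by rw [rpow_neg (by linarith), rpow_natCast]
  have hBpos := inv_pos.mpr hbk
  have hle : (b ^ k)⁻¹ / 2 ≤ 2 * (b ^ k)⁻¹ := by linarith
  have hint : IntervalIntegrable
      (fun h => |weierstrass b α (x + h) - weierstrass b α (x - h)| / h ^ (1 + α))
      volume ((b ^ k)⁻¹ / 2) (2 * (b ^ k)⁻¹) := by
    have hW := continuous_weierstrass hα0 hb
    refine ContinuousOn.intervalIntegrable (ContinuousOn.div (by fun_prop)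
      (continuous_rpow_const (by linarith)).continuousOn fun h hh => ?_)
    rw [Set.uIcc_of_le hle] at hh
    exact (rpow_pos_of_pos (by linarith [hh.1]) _).ne'
  have hscale (h : ℝ) : b ^ k * h = h / (b ^ k)⁻¹ := by field_simp
  rw [hB]
  calc 3 / 4 * sin (1 / 2) * |sin (b ^ k * x)| - 6 * weierstrassError α b
      = ∫ _ in ((b ^ k)⁻¹ / 2)..(2 * (b ^ k)⁻¹),
          b ^ k * (sin (1 / 2) / 2 * |sin (b ^ k * x)| - 4 * weierstrassError α b) := by
        rw [intervalIntegral.integral_const, smul_eq_mul]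
        field_simp
        ring
    _ ≤ _ := intervalIntegral.integral_mono_on hle intervalIntegrable_const hint fun h hh =>
        weierstrass_increment_lower_bound hα0 hα1 hb k x
          (hscale h ▸ (le_div_iff₀ hBpos).mpr (by linarith [hh.1]))
          (hscale h ▸ (div_le_iff₀ hBpos).mpr hh.2)

lemma six_mul_weierstrassError_le (hα0 : 0 < α) (hα1 : α < 1) (hb : 2 ≤ b) :
    6 * weierstrassError α b ≤
      (24 / (1 - 2 ^ (-α)) + 24 / (1 - 2 ^ (α - 1))) * (b ^ (-α) + b ^ (α - 1)) := by
  have hb0 : 0 < b := by linarith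
  have hq : b ^ (1 - α) = (b ^ (α - 1))⁻¹ := by
    rw [← rpow_neg hb0.le, neg_sub]
  unfold weierstrassError
  rw [hq]
  set r := b ^ (-α)
  set p := b ^ (α - 1)
  set r₀ : ℝ := 2 ^ (-α)
  set p₀ : ℝ := 2 ^ (α - 1)
  have hr0 : 0 < r := by positivity
  have hp0 : 0 < p := by positivity
  have hr : r ≤ r₀ := rpow_le_rpow_of_nonpos two_pos hb (by linarith)
  have hp : p ≤ p₀ := rpow_le_rpow_of_nonpos two_pos hb (by linarith)
  have hr1 : r₀ < 1 := rpow_neg_lt_one hα0 one_lt_two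
  have hp1 : p₀ < 1 := rpow_lt_one_of_one_lt_of_neg one_lt_two (by linarith)
  have hpart1 : 4 / (p⁻¹ - 1) ≤ 4 / (1 - p₀) * p :=
    calc 4 / (p⁻¹ - 1) = 4 * p / (1 - p) := by field_simp
      _ ≤ 4 * p / (1 - p₀) := div_le_div_of_nonneg_left (by positivity) (by linarith) (by linarith)
      _ = 4 / (1 - p₀) * p := by ring
  have hpart2 : 2 * r / (1 - r) ≤ 2 / (1 - r₀) * r :=
    calc 2 * r / (1 - r) ≤ 2 * r / (1 - r₀) :=
          div_le_div_of_nonneg_left (by positivity) (by linarith) (by linarith)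
      _ = 2 / (1 - r₀) * r := by ring
  have hpos1 : 0 ≤ 24 / (1 - r₀) * p := mul_nonneg (div_nonneg (by norm_num) (by linarith)) hp0.le
  have hpos2 : 0 ≤ 24 / (1 - p₀) * r := mul_nonneg (div_nonneg (by norm_num) (by linarith)) hr0.le
  have hpos3 : 0 ≤ 12 / (1 - r₀) * r := mul_nonneg (div_nonneg (by norm_num) (by linarith)) hr0.le
  have hexpand : (24 / (1 - r₀) + 24 / (1 - p₀)) * (r + p) =
      24 / (1 - r₀) * p + 24 / (1 - p₀) * r + 12 / (1 - r₀) * r + 6 * (4 / (1 - p₀) * p) +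
        6 * (2 / (1 - r₀) * r) := by ring
  linarith

end Weierstrass

/-- Lower bound without cancellation: for `f(x) = ∑_j b^{-jα} cos(b^j x)` there are
an absolute constant `c > 0` and a constant `cα = c(α) > 0` with
`∫_{b^{-k}/2}^{2b^{-k}} |f(x+h) - f(x-h)| h^{-(1+α)} dh ≥ c|sin(b^k x)| - cα(b^{-α} + b^{α-1})`. -/
theorem stmt17 :
    ∃ c : ℝ, 0 < c ∧ ∀ α : ℝ, 0 < α → α < 1 →
      ∃ cα : ℝ, 0 < cα ∧ ∀ b : ℕ, 1 < b → ∀ k : ℕ, ∀ x : ℝ,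
        (∫ h in ((b : ℝ) ^ (-(k : ℝ)) / 2)..(2 * (b : ℝ) ^ (-(k : ℝ))),
            |(∑' j : ℕ, (b : ℝ) ^ (-(j : ℝ) * α) * Real.cos ((b : ℝ) ^ (j : ℝ) * (x + h))) -
              ∑' j : ℕ, (b : ℝ) ^ (-(j : ℝ) * α) * Real.cos ((b : ℝ) ^ (j : ℝ) * (x - h))| /
            h ^ (1 + α)) ≥
          c * |Real.sin ((b : ℝ) ^ (k : ℝ) * x)| - cα * ((b : ℝ) ^ (-α) + (b : ℝ) ^ (α - 1)) := by
  have hsin : 0 < sin (1 / 2) := sin_pos_of_pos_of_lt_pi (by norm_num) (by linarith [pi_gt_three])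
  refine ⟨3 / 4 * sin (1 / 2), by positivity, fun α hα0 hα1 => ?_⟩
  have hr₀ : (2 : ℝ) ^ (-α) < 1 := rpow_neg_lt_one hα0 one_lt_two
  have hp₀ : (2 : ℝ) ^ (α - 1) < 1 := rpow_lt_one_of_one_lt_of_neg one_lt_two (by linarith)
  refine ⟨24 / (1 - 2 ^ (-α)) + 24 / (1 - 2 ^ (α - 1)),
    add_pos (div_pos (by norm_num) (by linarith)) (div_pos (by norm_num) (by linarith)),
    fun b hb k x => ?_⟩
  have hb2 : (2 : ℝ) ≤ b := by exact_mod_cast hb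
  rw [ge_iff_le, rpow_natCast]
  exact (sub_le_sub_left (six_mul_weierstrassError_le hα0 hα1 hb2) _).trans
    (weierstrass_integral_lower_bound hα0 hα1 (by linarith) k x)
end
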